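/- Lemma 1 (adapted from Shen et al.): Let (Z, d) be a metric space equipped with its Borel σ-algebra, let μᵢ and μⱼ be Borel probability measures on Z, let L ≥ 0, and let h, h' : Z → ℝ be L-Lipschitz functions taking values in [0, 1]. Then ε_{μᵢ}(h, h') ≤ ε_{μⱼ}(h, h') + 2L · W₁(μᵢ, μⱼ). -/

import Mathlib

/-!
The function `g = |h - h'|` is `2L`-Lipschitz, so `g z ≤ g z' + 2L d(z, z')` pointwise.
Integrating this against any coupling `γ` of `μᵢ` and `μⱼ` gives
`∫ g dμᵢ ≤ ∫ g dμⱼ + 2L ∫ d dγ`, and taking the infimum over couplings gives the bound.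
Since `g` is bounded, both integrals are finite and agree with the disagreements.
-/

open MeasureTheory

/-- The Earth Mover's (1-Wasserstein) distance between two Borel measures on a metric
space: the infimum, taken in `[0, ∞]`, over all probability couplings `γ` (probability
measures on `Z × Z` with first marginal `μ` and second marginal `ν`) of `∫ d(z, z') dγ`. -/
noncomputable def W1 {Z : Type*} [MetricSpace Z] [MeasurableSpace Z]
    (μ ν : Measure Z) : ENNReal :=
  ⨅ (γ : Measure (Z × Z)) (_ : IsProbabilityMeasure γ)
    (_ : γ.map Prod.fst = μ) (_ : γ.map Prod.snd = ν),
    ∫⁻ p, ENNReal.ofReal (dist p.1 p.2) ∂γ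

/-- The disagreement `ε_μ(h, h') = ∫ |h(z) − h'(z)| dμ(z)` between two hypotheses. -/
noncomputable def disag {Z : Type*} [MeasurableSpace Z]
    (μ : Measure Z) (h h' : Z → ℝ) : ℝ :=
  ∫ z, |h z - h' z| ∂μ

open scoped ENNReal NNReal

section Couplings

variable {Z : Type*} [MeasurableSpace Z]

def couplings (μ ν : Measure Z) : Set (Measure (Z × Z)) :=
  {γ | IsProbabilityMeasure γ ∧ γ.map Prod.fst = μ ∧ γ.map Prod.snd = ν}

theorem prod_mem_couplings (μ ν : Measure Z) [IsProbabilityMeasure μ] [IsProbabilityMeasure ν] :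
    μ.prod ν ∈ couplings μ ν := by
  refine ⟨inferInstance, ?_, ?_⟩ <;> simp

variable [MetricSpace Z]

theorem W1_eq_iInf_couplings (μ ν : Measure Z) :
    W1 μ ν =
      ⨅ γ : couplings μ ν, ∫⁻ p, ENNReal.ofReal (dist p.1 p.2) ∂(γ : Measure (Z × Z)) := by
  simp only [W1, iInf_and', couplings]
  exact iInf_subtype'

theorem le_add_mul_W1_of_forall_couplings {μ ν : Measure Z} [IsProbabilityMeasure μ]
    [IsProbabilityMeasure ν] {a b c : ℝ≥0∞} (hc : c ≠ ∞)
    (h : ∀ γ ∈ couplings μ ν, a ≤ b + c * ∫⁻ p, ENNReal.ofReal (dist p.1 p.2) ∂γ) :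
    a ≤ b + c * W1 μ ν := by
  -- the product coupling matters when `c = 0`: an empty infimum would be `∞` and `0 * ∞ = 0`
  have : Nonempty (couplings μ ν) := ⟨⟨_, prod_mem_couplings μ ν⟩⟩
  rw [W1_eq_iInf_couplings, ENNReal.mul_iInf (by simp [hc]), ENNReal.add_iInf]
  exact le_iInf fun γ => h γ.1 γ.2

variable [OpensMeasurableSpace Z]

theorem lintegral_ofReal_le_add_mul_of_map {μ ν : Measure Z} {γ : Measure (Z × Z)}
    {g : Z → ℝ} {K : ℝ≥0} (hg : LipschitzWith K g)
    (hμ : γ.map Prod.fst = μ) (hν : γ.map Prod.snd = ν) :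
    ∫⁻ z, ENNReal.ofReal (g z) ∂μ ≤
      ∫⁻ z, ENNReal.ofReal (g z) ∂ν + K * ∫⁻ p, ENNReal.ofReal (dist p.1 p.2) ∂γ := by
  have hgm : Measurable fun z => ENNReal.ofReal (g z) := hg.continuous.measurable.ennreal_ofReal
  subst hμ hν
  rw [lintegral_map hgm measurable_fst, lintegral_map hgm measurable_snd,
    ← lintegral_const_mul' _ _ ENNReal.coe_ne_top,
    ← lintegral_add_left (f := fun p : Z × Z => ENNReal.ofReal (g p.2)) (hgm.comp measurable_snd)]
  refine lintegral_mono fun p => ?_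
  calc ENNReal.ofReal (g p.1) ≤ ENNReal.ofReal (g p.2 + K * dist p.1 p.2) :=
        ENNReal.ofReal_le_ofReal (hg.le_add_mul p.1 p.2)
    _ ≤ ENNReal.ofReal (g p.2) + ENNReal.ofReal (K * dist p.1 p.2) := ENNReal.ofReal_add_le
    _ = ENNReal.ofReal (g p.2) + K * ENNReal.ofReal (dist p.1 p.2) := by
        rw [ENNReal.ofReal_mul K.coe_nonneg, ENNReal.ofReal_coe_nnreal]

theorem lintegral_ofReal_le_add_mul_W1 (μ ν : Measure Z) [IsProbabilityMeasure μ]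
    [IsProbabilityMeasure ν] {g : Z → ℝ} {K : ℝ≥0} (hg : LipschitzWith K g) :
    ∫⁻ z, ENNReal.ofReal (g z) ∂μ ≤ ∫⁻ z, ENNReal.ofReal (g z) ∂ν + K * W1 μ ν :=
  le_add_mul_W1_of_forall_couplings ENNReal.coe_ne_top fun _ hγ =>
    lintegral_ofReal_le_add_mul_of_map hg hγ.2.1 hγ.2.2

end Couplings

theorem ofReal_disag_eq_lintegral {Z : Type*} [MeasurableSpace Z] (μ : Measure Z)
    [IsFiniteMeasure μ] {h h' : Z → ℝ} (hm : AEMeasurable (fun z => h z - h' z) μ)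
    (hval : ∀ z, h z ∈ Set.Icc (0 : ℝ) 1) (hval' : ∀ z, h' z ∈ Set.Icc (0 : ℝ) 1) :
    ENNReal.ofReal (disag μ h h') = ∫⁻ z, ENNReal.ofReal |h z - h' z| ∂μ := by
  have hbound (z : Z) : |h z - h' z| ∈ Set.Icc (0 : ℝ) 1 :=
    ⟨abs_nonneg _, abs_sub_le_of_nonneg_of_le (hval z).1 (hval z).2 (hval' z).1 (hval' z).2⟩
  exact ofReal_integral_eq_lintegral_ofReal
    (Integrable.of_mem_Icc 0 1 hm.abs (ae_of_all _ hbound)) (ae_of_all _ fun z => (hbound z).1)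

theorem lemma_shen_general
    {Z : Type*} [MetricSpace Z] [MeasurableSpace Z] [BorelSpace Z]
    (μi μj : Measure Z) [IsProbabilityMeasure μi] [IsProbabilityMeasure μj]
    (L : ℝ) (h h' : Z → ℝ)
    (hh : LipschitzWith (Real.toNNReal L) h)
    (hh' : LipschitzWith (Real.toNNReal L) h')
    (hhval : ∀ z, h z ∈ Set.Icc (0 : ℝ) 1)
    (hh'val : ∀ z, h' z ∈ Set.Icc (0 : ℝ) 1) :
    ENNReal.ofReal (disag μi h h') ≤
      ENNReal.ofReal (disag μj h h') + ENNReal.ofReal (2 * L) * W1 μi μj := by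
  have hdiff : LipschitzWith (Real.toNNReal (2 * L)) fun z => h z - h' z := by
    rw [Real.toNNReal_mul zero_le_two, Real.toNNReal_ofNat, two_mul]
    exact hh.sub hh'
  have habs : LipschitzWith (Real.toNNReal (2 * L)) fun z => |h z - h' z| := by
    simpa only [one_mul, Function.comp_def, Real.norm_eq_abs] using
      lipschitzWith_one_norm.comp hdiff
  have hm : Measurable fun z => h z - h' z := hdiff.continuous.measurable
  rw [ofReal_disag_eq_lintegral μi hm.aemeasurable hhval hh'val,
    ofReal_disag_eq_lintegral μj hm.aemeasurable hhval hh'val]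
  exact lintegral_ofReal_le_add_mul_W1 μi μj habs

/-- Lemma 1 (adapted from Shen et al.): for `L`-Lipschitz hypotheses `h, h'` taking
values in `[0, 1]`, the disagreement satisfies
`ε_{μᵢ}(h, h') ≤ ε_{μⱼ}(h, h') + 2L · W₁(μᵢ, μⱼ)`. -/
theorem lemma_shen
    {Z : Type*} [MetricSpace Z] [MeasurableSpace Z] [BorelSpace Z]
    (μi μj : Measure Z) [IsProbabilityMeasure μi] [IsProbabilityMeasure μj]
    (L : ℝ) (hL : 0 ≤ L) (h h' : Z → ℝ)
    (hh : LipschitzWith (Real.toNNReal L) h)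
    (hh' : LipschitzWith (Real.toNNReal L) h')
    (hhval : ∀ z, h z ∈ Set.Icc (0 : ℝ) 1)
    (hh'val : ∀ z, h' z ∈ Set.Icc (0 : ℝ) 1) :
    ENNReal.ofReal (disag μi h h') ≤
      ENNReal.ofReal (disag μj h h') + ENNReal.ofReal (2 * L) * W1 μi μj :=
  lemma_shen_general μi μj L h h' hh hh' hhval hh'val
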